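/- Let (A, ⟨⟨-,-⟩⟩, Φ) be a double quasi-Hamiltonian algebra over A₀ (A₀-linear double quasi-Poisson bracket with multiplicative moment map Φ) and let φ be a bracket-compatible involutive anti-automorphism of A. Suppose c = Σ_s c_s e_s with c_s ∈ ℂ^× is such that φ(Φ_s)⁻¹ = c_s Φ_s for every s ∈ I (the inverse being taken in the corner algebra e_s A e_s). Then, for any choice of γ_s ∈ ℂ with γ_s² = c_s, the element Φ' := Σ_s γ_s Φ_s is again a moment map for (A, ⟨⟨-,-⟩⟩), and it satisfies φ(Φ')·Φ' = 1. -/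
import Mathlib


open TensorProduct

noncomputable section

namespace Stmt4

variable {A : Type*} [Ring A] [Algebra ℂ A]

/-- The flip `(c ⊗ d)^∘ = d ⊗ c` on `A ⊗[ℂ] A`. -/
def flipT : A ⊗[ℂ] A →ₗ[ℂ] A ⊗[ℂ] A := (TensorProduct.comm ℂ A A).toLinearMap

/-- The outer bimodule structure `a ⬝ (d' ⊗ d'') ⬝ b = (a d') ⊗ (d'' b)`. -/
def outerAct (a b : A) : A ⊗[ℂ] A →ₗ[ℂ] A ⊗[ℂ] A :=
  TensorProduct.map (LinearMap.mulLeft ℂ a) (LinearMap.mulRight ℂ b)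

/-- The inner bimodule structure `a ∗ (d' ⊗ d'') ∗ b = (d' b) ⊗ (a d'')`. -/
def innerAct (a b : A) : A ⊗[ℂ] A →ₗ[ℂ] A ⊗[ℂ] A :=
  TensorProduct.map (LinearMap.mulRight ℂ b) (LinearMap.mulLeft ℂ a)

/-- Axioms of a double bracket on `A`. -/
structure IsDoubleBracket (br : A →ₗ[ℂ] A →ₗ[ℂ] A ⊗[ℂ] A) : Prop where
  cyclic : ∀ a b : A, br a b = - flipT (br b a)
  right_der : ∀ a b c : A, br a (b * c) = outerAct 1 c (br a b) + outerAct b 1 (br a c)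
  left_der : ∀ a b c : A, br (b * c) a = innerAct 1 c (br b a) + innerAct b 1 (br c a)

/-- `τ₍₁₂₃₎ : (a₁ ⊗ a₂) ⊗ a₃ ↦ (a₃ ⊗ a₁) ⊗ a₂`. -/
def cyc3 : (A ⊗[ℂ] A) ⊗[ℂ] A →ₗ[ℂ] (A ⊗[ℂ] A) ⊗[ℂ] A :=
  ((TensorProduct.comm ℂ (A ⊗[ℂ] A) A).trans (TensorProduct.assoc ℂ A A A).symm).toLinearMap

/-- The left extension of a double bracket. -/
def brL (br : A →ₗ[ℂ] A →ₗ[ℂ] A ⊗[ℂ] A) (a : A) :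
    A ⊗[ℂ] A →ₗ[ℂ] (A ⊗[ℂ] A) ⊗[ℂ] A :=
  TensorProduct.map (br a) LinearMap.id

/-- The double Jacobiator of a double bracket. -/
def tripleBr (br : A →ₗ[ℂ] A →ₗ[ℂ] A ⊗[ℂ] A) (a b c : A) : (A ⊗[ℂ] A) ⊗[ℂ] A :=
  brL br a (br b c) + cyc3 (brL br b (br c a)) + cyc3 (cyc3 (brL br c (br a b)))

/-- The double bracket is Poisson: the double Jacobiator vanishes identically. -/
def IsPoisson (br : A →ₗ[ℂ] A →ₗ[ℂ] A ⊗[ℂ] A) : Prop :=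
  ∀ a b c : A, tripleBr br a b c = 0

variable {I : Type*} [Fintype I] [DecidableEq I]

/-- `(e s)` is a complete family of orthogonal idempotents. -/
def IsCompleteOrthIdem (e : I → A) : Prop :=
  (∀ s t : I, e s * e t = if s = t then e s else 0) ∧ (∑ s, e s = 1)

/-- `A₀`-linearity of a double bracket. -/
def IsA0Linear (br : A →ₗ[ℂ] A →ₗ[ℂ] A ⊗[ℂ] A) (e : I → A) : Prop :=
  ∀ (s : I) (a : A), br (e s) a = 0 ∧ br a (e s) = 0

/-- `μ` is a moment map for the double Poisson bracket. -/
def IsMomentMap (br : A →ₗ[ℂ] A →ₗ[ℂ] A ⊗[ℂ] A) (e : I → A) (μ : A) : Prop :=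
  (μ = ∑ s, e s * μ * e s) ∧
  ∀ (s : I) (a : A),
    br (e s * μ * e s) a = (a * e s) ⊗ₜ[ℂ] e s - e s ⊗ₜ[ℂ] (e s * a)

/-- `Φ` is a (multiplicative) moment map for the double quasi-Poisson bracket. -/
def IsQuasiMomentMap (br : A →ₗ[ℂ] A →ₗ[ℂ] A ⊗[ℂ] A) (e : I → A) (Φ : A) : Prop :=
  IsUnit Φ ∧ (Φ = ∑ s, e s * Φ * e s) ∧
  ∀ (s : I) (a : A),
    br (e s * Φ * e s) a = (2 : ℂ)⁻¹ • (
      (a * e s) ⊗ₜ[ℂ] (e s * Φ * e s) - e s ⊗ₜ[ℂ] (e s * Φ * e s * a)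
      + (a * (e s * Φ * e s)) ⊗ₜ[ℂ] e s - (e s * Φ * e s) ⊗ₜ[ℂ] (e s * a))

/-- `φ` is an involutive anti-automorphism of `A` fixing the idempotents. -/
def IsAntiInvolution (e : I → A) (φ : A →ₗ[ℂ] A) : Prop :=
  (∀ a b : A, φ (a * b) = φ b * φ a) ∧ (∀ a : A, φ (φ a) = a) ∧ (∀ s : I, φ (e s) = e s)

/-- Bracket-compatibility: `(φ ⊗ φ)(⟨⟨a,b⟩⟩) = ⟨⟨φ(a),φ(b)⟩⟩^∘`. -/
def IsBracketCompat (br : A →ₗ[ℂ] A →ₗ[ℂ] A ⊗[ℂ] A) (φ : A →ₗ[ℂ] A) : Prop :=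
  ∀ a b : A, TensorProduct.map φ φ (br a b) = flipT (br (φ a) (φ b))

/-- The right-hand side of the quasi-Poisson property of the double Jacobiator. -/
def qpRhs (e : I → A) (a b c : A) : (A ⊗[ℂ] A) ⊗[ℂ] A :=
  (4 : ℂ)⁻¹ • ∑ s, (
    ((c * e s * a) ⊗ₜ[ℂ] (e s * b)) ⊗ₜ[ℂ] e s
    - ((c * e s * a) ⊗ₜ[ℂ] e s) ⊗ₜ[ℂ] (b * e s)
    - ((c * e s) ⊗ₜ[ℂ] (a * e s * b)) ⊗ₜ[ℂ] e s
    + ((c * e s) ⊗ₜ[ℂ] (a * e s)) ⊗ₜ[ℂ] (b * e s)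
    - ((e s * a) ⊗ₜ[ℂ] (e s * b)) ⊗ₜ[ℂ] (e s * c)
    + ((e s * a) ⊗ₜ[ℂ] e s) ⊗ₜ[ℂ] (b * e s * c)
    + (e s ⊗ₜ[ℂ] (a * e s * b)) ⊗ₜ[ℂ] (e s * c)
    - (e s ⊗ₜ[ℂ] (a * e s)) ⊗ₜ[ℂ] (b * e s * c))

/-- The double bracket is quasi-Poisson. -/
def IsQuasiPoisson (br : A →ₗ[ℂ] A →ₗ[ℂ] A ⊗[ℂ] A) (e : I → A) : Prop :=
  ∀ a b c : A, tripleBr br a b c = qpRhs e a b c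

/-- Let `(A, ⟨⟨-,-⟩⟩, Φ)` be a double quasi-Hamiltonian algebra over `A₀`
with bracket-compatible involutive anti-automorphism `φ`.  If `φ(Φₛ)⁻¹ = cₛ Φₛ` in the
corner algebra `eₛ A eₛ` with `cₛ ∈ ℂˣ`, then for any `γₛ` with `γₛ² = cₛ`, the element
`Φ' = ∑ₛ γₛ Φₛ` is again a moment map and `φ(Φ')·Φ' = 1`. -/
theorem rescaled_quasi_moment_map
    (e : I → A) (he : IsCompleteOrthIdem e)
    (br : A →ₗ[ℂ] A →ₗ[ℂ] A ⊗[ℂ] A)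
    (hbr : IsDoubleBracket br) (hlin : IsA0Linear br e) (hqP : IsQuasiPoisson br e)
    (Φ : A) (hΦ : IsQuasiMomentMap br e Φ)
    (φ : A →ₗ[ℂ] A) (hφ : IsAntiInvolution e φ) (hcomp : IsBracketCompat br φ)
    (c : I → ℂ) (hc : ∀ s, c s ≠ 0)
    (hcinv : ∀ s : I,
      φ (e s * Φ * e s) * (c s • (e s * Φ * e s)) = e s ∧
      (c s • (e s * Φ * e s)) * φ (e s * Φ * e s) = e s)
    (γ : I → ℂ) (hγ : ∀ s, γ s ^ 2 = c s) :
    IsQuasiMomentMap br e (∑ s, γ s • (e s * Φ * e s)) ∧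
    φ (∑ s, γ s • (e s * Φ * e s)) * (∑ s, γ s • (e s * Φ * e s)) = 1 := by
  obtain ⟨horth, hsum⟩ := he
  obtain ⟨hΦu, hΦsum, hΦbr⟩ := hΦ
  obtain ⟨hanti, hinv2, hfix⟩ := hφ
  have hid : ∀ s, e s * e s = e s := fun s => by simpa using horth s s
  have hzero : ∀ {s t : I}, s ≠ t → ∀ x y : A, (x * e s) * (e t * y) = 0 := by
    intro s t hst x y
    rw [mul_assoc, ← mul_assoc (e s), horth, if_neg hst, zero_mul, mul_zero]
  have hφF : ∀ s, φ (e s * Φ * e s) = e s * φ Φ * e s := by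
    intro s
    rw [hanti, hanti, hfix, ← mul_assoc]
  have hcorner : ∀ s t, e s * (e t * Φ * e t) * e s
      = if s = t then e s * Φ * e s else 0 := by
    intro s t
    by_cases h : s = t
    · subst h
      rw [if_pos rfl,
        show e s * (e s * Φ * e s) * e s = (e s * e s) * Φ * (e s * e s) by
          noncomm_ring, hid]
    · rw [if_neg h,
        show e s * (e t * Φ * e t) * e s = ((e s * e t) * Φ) * (e t * e s) by
          noncomm_ring, horth, if_neg h, zero_mul, zero_mul]
  have hΦ's : ∀ s, e s * (∑ t, γ t • (e t * Φ * e t)) * e s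
      = γ s • (e s * Φ * e s) := by
    intro s
    rw [Finset.mul_sum, Finset.sum_mul]
    simp only [mul_smul_comm, smul_mul_assoc]
    rw [Finset.sum_eq_single s]
    · rw [hcorner s s, if_pos rfl]
    · intro t _ hts
      rw [hcorner s t, if_neg (fun h => hts h.symm), smul_zero]
    · intro h; exact absurd (Finset.mem_univ s) h
  have hoff1 : ∀ {s t : I}, s ≠ t →
      φ (e s * Φ * e s) * (e t * Φ * e t) = 0 := by
    intro s t hst
    rw [hφF s, mul_assoc (e t) Φ (e t)]
    exact hzero hst (e s * φ Φ) (Φ * e t)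
  have hoff2 : ∀ {s t : I}, s ≠ t →
      (e s * Φ * e s) * φ (e t * Φ * e t) = 0 := by
    intro s t hst
    rw [hφF t, mul_assoc (e t) (φ Φ) (e t)]
    exact hzero hst (e s * Φ) (φ Φ * e t)
  have hγγ : ∀ s, γ s * γ s = c s := fun s => by rw [← sq]; exact hγ s
  have hmul1 : φ (∑ s, γ s • (e s * Φ * e s)) * (∑ s, γ s • (e s * Φ * e s)) = 1 := by
    rw [map_sum]
    simp only [map_smul]
    rw [Finset.sum_mul_sum]
    have key : ∀ s : I, (∑ t, (γ s • φ (e s * Φ * e s)) * (γ t • (e t * Φ * e t))) = e s := by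
      intro s
      rw [Finset.sum_eq_single s]
      · rw [smul_mul_assoc, mul_smul_comm, smul_smul, hγγ s, ← mul_smul_comm]
        exact (hcinv s).1
      · intro t _ hts
        rw [smul_mul_assoc, mul_smul_comm, hoff1 (fun h => hts h.symm), smul_zero,
          smul_zero]
      · intro h; exact absurd (Finset.mem_univ s) h
    rw [Finset.sum_congr rfl (fun s _ => key s), hsum]
  have hmul2 : (∑ s, γ s • (e s * Φ * e s)) * φ (∑ s, γ s • (e s * Φ * e s)) = 1 := by
    rw [map_sum]
    simp only [map_smul]
    rw [Finset.sum_mul_sum]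
    have key : ∀ s : I, (∑ t, (γ s • (e s * Φ * e s)) * (γ t • φ (e t * Φ * e t))) = e s := by
      intro s
      rw [Finset.sum_eq_single s]
      · rw [smul_mul_assoc, mul_smul_comm, smul_smul, mul_comm, hγγ s, ← smul_mul_assoc]
        exact (hcinv s).2
      · intro t _ hts
        rw [smul_mul_assoc, mul_smul_comm, hoff2 (fun h => hts h.symm), smul_zero,
          smul_zero]
      · intro h; exact absurd (Finset.mem_univ s) h
    rw [Finset.sum_congr rfl (fun s _ => key s), hsum]
  refine ⟨⟨⟨⟨_, _, hmul2, hmul1⟩, rfl⟩, ?_, ?_⟩, hmul1⟩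
  · rw [Finset.sum_congr rfl (fun s _ => hΦ's s)]
  · intro s a
    rw [hΦ's s, map_smul, LinearMap.smul_apply, hΦbr s a]
    simp only [mul_smul_comm, smul_mul_assoc, TensorProduct.tmul_smul,
      TensorProduct.smul_tmul', smul_smul, smul_sub, smul_add]
    rw [mul_comm (γ s) ((2:ℂ)⁻¹)]

end Stmt4
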